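/- (Golub–Van Loan norm bounds on the TLS solution) If σ̂_{n_x}⁺ > σ̂_{n_x+1} and δ̂ = σ̂_{n_x}⁺ - σ̂_{n_x+1}, then ‖Ĥ⁻ v̂_{n_x}‖ / (2δ̂) ≤ ‖â_tls‖ ≤ ‖Ĥ⁻‖ / δ̂, where v̂_{n_x} is the right singular vector of Ĥ⁺ corresponding to its smallest singular value. -/

import Mathlib

open Matrix

/-- The Euclidean norm of a finite real vector. -/
noncomputable def euclNorm {k : ℕ} (x : Fin k → ℝ) : ℝ := Real.sqrt (∑ i, x i ^ 2)

/-- The smallest singular value of a (wide) matrix `M : r × c` with `r ≤ c`, characterized as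
the infimum of `‖xᵀM‖` over unit vectors `x`. -/
noncomputable def sminSV {r c : ℕ} (M : Matrix (Fin r) (Fin c) ℝ) : ℝ :=
  sInf {t | ∃ x : Fin r → ℝ, euclNorm x = 1 ∧ t = euclNorm (x ᵥ* M)}

/-! With `M = Ĥ⁺Ĥ⁺ᵀ - σ̂²_{n_x+1} I` and `z = M⁻¹ Ĥ⁺ Ĥ⁻ᵀ` we have `â_tls = -zᵀ`, and `M` is positive
definite because `Ĥ⁺Ĥ⁺ᵀ ≥ (σ̂⁺)²`. Both bounds hold with the sharper constant
`κ = σ̂⁺ / ((σ̂⁺)² - σ̂²)`, which lies between `1/(2δ̂)` and `1/δ̂`.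

* Lower bound: `u` is an eigenvector of `M` for `(σ̂⁺)² - σ̂²`, so `⟨u, z⟩ = κ ⟨Ĥ⁻, v⟩`.
* Upper bound: with `w = M⁻¹ z` and `y = Ĥ⁺ᵀ w` one has `‖z‖² = ⟨y, Ĥ⁻⟩ ≤ ‖y‖ ‖Ĥ⁻‖`, and the
  operator inequality `(B - σ̂²)² ≥ ((σ̂⁺)² - σ̂²)² / (σ̂⁺)² · B` for `B = Ĥ⁺Ĥ⁺ᵀ ≥ (σ̂⁺)²`, applied
  to `w`, gives `‖y‖ ≤ κ ‖z‖`.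
-/

section euclNorm

variable {k : ℕ}

lemma euclNorm_nonneg (x : Fin k → ℝ) : 0 ≤ euclNorm x := Real.sqrt_nonneg _

lemma sq_euclNorm (x : Fin k → ℝ) : euclNorm x ^ 2 = x ⬝ᵥ x := by
  rw [euclNorm, Real.sq_sqrt (Finset.sum_nonneg fun i _ => sq_nonneg _)]
  simp only [dotProduct, sq]

lemma abs_dotProduct_le_euclNorm_mul (x y : Fin k → ℝ) :
    |x ⬝ᵥ y| ≤ euclNorm x * euclNorm y := by
  rw [← Real.sqrt_sq_eq_abs, euclNorm, euclNorm, ← Real.sqrt_mul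
    (Finset.sum_nonneg fun i _ => sq_nonneg _)]
  exact Real.sqrt_le_sqrt (Finset.sum_mul_sq_le_sq_mul_sq ..)

lemma euclNorm_smul (c : ℝ) (x : Fin k → ℝ) : euclNorm (c • x) = |c| * euclNorm x := by
  simp_rw [euclNorm, Pi.smul_apply, smul_eq_mul, mul_pow, ← Finset.mul_sum,
    Real.sqrt_mul (sq_nonneg c), Real.sqrt_sq_eq_abs]

lemma euclNorm_neg (x : Fin k → ℝ) : euclNorm (-x) = euclNorm x := by
  simpa using euclNorm_smul (-1) x

end euclNorm

lemma sminSV_nonneg {r c : ℕ} (M : Matrix (Fin r) (Fin c) ℝ) : 0 ≤ sminSV M :=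
  Real.sInf_nonneg (by rintro t ⟨x, -, rfl⟩; exact euclNorm_nonneg _)

lemma sminSV_mul_euclNorm_le {r c : ℕ} (M : Matrix (Fin r) (Fin c) ℝ) (x : Fin r → ℝ) :
    sminSV M * euclNorm x ≤ euclNorm (x ᵥ* M) := by
  rcases (euclNorm_nonneg x).eq_or_lt with hx | hx
  · rw [← hx, mul_zero]
    exact euclNorm_nonneg _
  have hunit : euclNorm ((euclNorm x)⁻¹ • x) = 1 := by
    rw [euclNorm_smul, abs_of_pos (inv_pos.2 hx), inv_mul_cancel₀ hx.ne']
  have hle : sminSV M ≤ euclNorm (((euclNorm x)⁻¹ • x) ᵥ* M) :=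
    csInf_le ⟨0, by rintro t ⟨y, -, rfl⟩; exact euclNorm_nonneg _⟩ ⟨_, hunit, rfl⟩
  rwa [smul_vecMul, euclNorm_smul, abs_of_pos (inv_pos.2 hx), le_inv_mul_iff₀ hx,
    mul_comm] at hle

lemma sq_sminSV_mul_dotProduct_self_le {r c : ℕ} (M : Matrix (Fin r) (Fin c) ℝ)
    (x : Fin r → ℝ) : sminSV M ^ 2 * (x ⬝ᵥ x) ≤ (x ᵥ* M) ⬝ᵥ (x ᵥ* M) := by
  rw [← sq_euclNorm, ← sq_euclNorm, ← mul_pow]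
  exact pow_le_pow_left₀ (mul_nonneg (sminSV_nonneg M) (euclNorm_nonneg x))
    (sminSV_mul_euclNorm_le M x) 2

section QuadraticFormBound

variable {ι : Type*} [Fintype ι] [DecidableEq ι] {B : Matrix ι ι ℝ} {a c : ℝ}

lemma posDef_sub_smul_one (hBs : B.IsSymm) (hB : ∀ x, a * (x ⬝ᵥ x) ≤ x ⬝ᵥ (B *ᵥ x))
    (hca : c < a) : (B - c • 1).PosDef := by
  refine PosDef.of_dotProduct_mulVec_pos ?_ fun x hx => ?_
  · exact isHermitian_iff_isSymm.2 (hBs.sub (isSymm_one.smul c))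
  have hxx : 0 < x ⬝ᵥ x :=
    (dotProduct_star_self_nonneg x).lt_of_ne' (by simpa using hx)
  rw [star_trivial, sub_mulVec, smul_mulVec, one_mulVec, dotProduct_sub, dotProduct_smul,
    smul_eq_mul]
  nlinarith [hB x]

lemma sq_sub_mul_dotProduct_mulVec_le (hB : ∀ x, a * (x ⬝ᵥ x) ≤ x ⬝ᵥ (B *ᵥ x))
    (hc : 0 ≤ c) (hca : c ≤ a) (w : ι → ℝ) :
    (a - c) ^ 2 * (w ⬝ᵥ (B *ᵥ w)) ≤ a * ((B - c • 1) *ᵥ w) ⬝ᵥ ((B - c • 1) *ᵥ w) := by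
  -- `(B - c)² = (B - a)² + (a - c) (2B - (a + c))`, and `a ≤ B` bounds the last factor below
  have hsq : 0 ≤ (B *ᵥ w - a • w) ⬝ᵥ (B *ᵥ w - a • w) := by
    simpa using dotProduct_star_self_nonneg (B *ᵥ w - a • w)
  rw [sub_mulVec, smul_mulVec, one_mulVec]
  simp only [dotProduct_sub, sub_dotProduct, dotProduct_smul, smul_dotProduct,
    smul_eq_mul] at hsq ⊢
  rw [dotProduct_comm (B *ᵥ w) w] at hsq ⊢
  nlinarith [mul_nonneg (hc.trans hca) hsq,
    mul_nonneg (sub_nonneg.2 (pow_le_pow_left₀ hc hca 2)) (sub_nonneg.2 (hB w))]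

end QuadraticFormBound

section Resolvent

variable {m n : ℕ} (A : Matrix (Fin m) (Fin n) ℝ) {s t : ℝ}

lemma dotProduct_mul_transpose_mulVec (x : Fin m → ℝ) :
    x ⬝ᵥ ((A * Aᵀ) *ᵥ x) = (x ᵥ* A) ⬝ᵥ (x ᵥ* A) := by
  rw [← mulVec_mulVec, dotProduct_mulVec, mulVec_transpose]

lemma isSymm_mul_transpose : (A * Aᵀ).IsSymm :=
  IsSymm.ext fun i j => by simp [mul_apply, mul_comm]

lemma isSymm_mul_transpose_sub_smul_one (c : ℝ) : (A * Aᵀ - c • 1).IsSymm :=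
  (isSymm_mul_transpose A).sub (isSymm_one.smul c)

variable {A}

lemma posDef_mul_transpose_sub_smul_one (hA : ∀ x, s ^ 2 * (x ⬝ᵥ x) ≤ (x ᵥ* A) ⬝ᵥ (x ᵥ* A))
    (ht : 0 ≤ t) (hts : t < s) : (A * Aᵀ - t ^ 2 • 1).PosDef := by
  refine posDef_sub_smul_one (isSymm_mul_transpose A) (fun x => ?_)
    (pow_lt_pow_left₀ hts ht two_ne_zero)
  rw [dotProduct_mul_transpose_mulVec]
  exact hA x

lemma mul_euclNorm_vecMul_le_mul_euclNorm_mulVec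
    (hA : ∀ x, s ^ 2 * (x ⬝ᵥ x) ≤ (x ᵥ* A) ⬝ᵥ (x ᵥ* A)) (ht : 0 ≤ t) (hts : t ≤ s)
    (w : Fin m → ℝ) :
    (s ^ 2 - t ^ 2) * euclNorm (w ᵥ* A) ≤ s * euclNorm ((A * Aᵀ - t ^ 2 • 1) *ᵥ w) := by
  have key := sq_sub_mul_dotProduct_mulVec_le (B := A * Aᵀ)
    (fun x => by rw [dotProduct_mul_transpose_mulVec]; exact hA x) (sq_nonneg t)
    (pow_le_pow_left₀ ht hts 2) w
  rw [dotProduct_mul_transpose_mulVec] at key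
  rw [← pow_le_pow_iff_left₀ (mul_nonneg (sub_nonneg.2 (pow_le_pow_left₀ ht hts 2))
    (euclNorm_nonneg _)) (mul_nonneg (ht.trans hts) (euclNorm_nonneg _)) two_ne_zero,
    mul_pow, mul_pow, sq_euclNorm, sq_euclNorm]
  exact key

lemma euclNorm_resolvent_le (hA : ∀ x, s ^ 2 * (x ⬝ᵥ x) ≤ (x ᵥ* A) ⬝ᵥ (x ᵥ* A))
    (ht : 0 ≤ t) (hts : t < s) (h : Fin n → ℝ) :
    euclNorm ((A * Aᵀ - t ^ 2 • 1)⁻¹ *ᵥ (A *ᵥ h)) ≤ s / (s ^ 2 - t ^ 2) * euclNorm h := by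
  set M := A * Aᵀ - t ^ 2 • (1 : Matrix (Fin m) (Fin m) ℝ)
  set z := M⁻¹ *ᵥ (A *ᵥ h)
  set w := M⁻¹ *ᵥ z
  set y := w ᵥ* A
  have hM := posDef_mul_transpose_sub_smul_one hA ht hts
  have hgap : 0 < s ^ 2 - t ^ 2 := sub_pos.2 (pow_lt_pow_left₀ hts ht two_ne_zero)
  have hs : 0 < s := ht.trans_lt hts
  have hMw : M *ᵥ w = z := by
    rw [mulVec_mulVec, mul_nonsing_inv _ ((isUnit_iff_isUnit_det M).1 hM.isUnit), one_mulVec]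
  have hzz : z ⬝ᵥ z = y ⬝ᵥ h := by
    conv_lhs => rw [dotProduct_mulVec, ← mulVec_transpose,
      (isSymm_mul_transpose_sub_smul_one A _).inv.eq, dotProduct_mulVec]
  have hyz : (s ^ 2 - t ^ 2) * euclNorm y ≤ s * euclNorm z :=
    hMw ▸ mul_euclNorm_vecMul_le_mul_euclNorm_mulVec hA ht hts.le w
  rw [div_mul_eq_mul_div, le_div_iff₀ hgap]
  rcases (euclNorm_nonneg z).eq_or_lt with hz | hz
  · rw [← hz, zero_mul]
    exact mul_nonneg hs.le (euclNorm_nonneg h)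
  have hzy : euclNorm z ^ 2 ≤ euclNorm y * euclNorm h := by
    rw [sq_euclNorm, hzz]
    exact (le_abs_self _).trans (abs_dotProduct_le_euclNorm_mul y h)
  nlinarith [mul_le_mul_of_nonneg_right hyz (euclNorm_nonneg h)]

lemma dotProduct_resolvent_eq_of_singular_pair
    (hA : ∀ x, s ^ 2 * (x ⬝ᵥ x) ≤ (x ᵥ* A) ⬝ᵥ (x ᵥ* A)) (ht : 0 ≤ t) (hts : t < s)
    {u : Fin m → ℝ} {v : Fin n → ℝ} (hv : A *ᵥ v = s • u) (hu : u ᵥ* A = s • v) (h : Fin n → ℝ) :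
    u ⬝ᵥ ((A * Aᵀ - t ^ 2 • 1)⁻¹ *ᵥ (A *ᵥ h)) = s / (s ^ 2 - t ^ 2) * (h ⬝ᵥ v) := by
  set M := A * Aᵀ - t ^ 2 • (1 : Matrix (Fin m) (Fin m) ℝ)
  have hM := posDef_mul_transpose_sub_smul_one hA ht hts
  have hgap : s ^ 2 - t ^ 2 ≠ 0 := (sub_pos.2 (pow_lt_pow_left₀ hts ht two_ne_zero)).ne'
  have hMu : M *ᵥ u = (s ^ 2 - t ^ 2) • u := by
    rw [sub_mulVec, ← mulVec_mulVec, mulVec_transpose, hu, mulVec_smul, hv, smul_smul,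
      smul_mulVec, one_mulVec, sub_smul, ← sq]
  have hMinvu : M⁻¹ *ᵥ u = (s ^ 2 - t ^ 2)⁻¹ • u := by
    calc M⁻¹ *ᵥ u = (s ^ 2 - t ^ 2)⁻¹ • (M⁻¹ *ᵥ (M *ᵥ u)) := by
          rw [hMu, mulVec_smul, smul_smul, inv_mul_cancel₀ hgap, one_smul]
      _ = (s ^ 2 - t ^ 2)⁻¹ • u := by
          rw [mulVec_mulVec, nonsing_inv_mul _ ((isUnit_iff_isUnit_det M).1 hM.isUnit),
            one_mulVec]
  rw [dotProduct_mulVec, ← mulVec_transpose, (isSymm_mul_transpose_sub_smul_one A _).inv.eq,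
    hMinvu, smul_dotProduct, dotProduct_mulVec, hu, smul_dotProduct, dotProduct_comm,
    smul_eq_mul, smul_eq_mul, div_eq_inv_mul, mul_assoc]

end Resolvent

theorem golub_van_loan_tls_norm_bounds_general
    (nx p : ℕ)
    (Hp : Matrix (Fin nx) (Fin (p + 1)) ℝ)
    (Hm : Matrix (Fin 1) (Fin (p + 1)) ℝ)
    (H : Matrix (Fin (nx + 1)) (Fin (p + 1)) ℝ)
    (σp σ : ℝ) (hσp : σp = sminSV Hp) (hσ : σ = sminSV H)
    (hgap : σ < σp)
    -- (u, v) is a singular pair of Ĥ⁺ for its smallest singular value σ̂⁺_{n_x}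
    (u : Fin nx → ℝ) (v : Fin (p + 1) → ℝ)
    (hu_unit : euclNorm u = 1)
    (hpair1 : Hp *ᵥ v = σp • u) (hpair2 : u ᵥ* Hp = σp • v)
    (atls : Matrix (Fin 1) (Fin nx) ℝ)
    (htls : atls = -(Hm * Hpᵀ * (Hp * Hpᵀ - σ ^ 2 • (1 : Matrix (Fin nx) (Fin nx) ℝ))⁻¹)) :
    |∑ j, Hm 0 j * v j| / (2 * (σp - σ)) ≤ euclNorm (fun j => atls 0 j) ∧
    euclNorm (fun j => atls 0 j) ≤ euclNorm (fun j => Hm 0 j) / (σp - σ) := by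
  have hσ0 : 0 ≤ σ := hσ ▸ sminSV_nonneg H
  have hA : ∀ x, σp ^ 2 * (x ⬝ᵥ x) ≤ (x ᵥ* Hp) ⬝ᵥ (x ᵥ* Hp) :=
    hσp ▸ sq_sminSV_mul_dotProduct_self_le Hp
  set z := (Hp * Hpᵀ - σ ^ 2 • (1 : Matrix (Fin nx) (Fin nx) ℝ))⁻¹ *ᵥ (Hp *ᵥ Hm 0)
  have hatls : (fun j => atls 0 j) = -z := by
    ext j
    rw [htls, neg_apply, Pi.neg_apply, mul_apply_eq_vecMul, mul_apply_eq_vecMul, vecMul_transpose,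
      ← mulVec_transpose, (isSymm_mul_transpose_sub_smul_one Hp _).inv.eq]
  have hδ : 0 < σp - σ := sub_pos.2 hgap
  have hκ_lower : 1 / (2 * (σp - σ)) ≤ σp / (σp ^ 2 - σ ^ 2) := by
    rw [div_le_div_iff₀ (by positivity) (by nlinarith)]
    nlinarith
  have hκ_upper : σp / (σp ^ 2 - σ ^ 2) ≤ 1 / (σp - σ) := by
    rw [div_le_div_iff₀ (by nlinarith) hδ]
    nlinarith
  rw [hatls, euclNorm_neg]
  constructor
  · calc |∑ j, Hm 0 j * v j| / (2 * (σp - σ))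
        = 1 / (2 * (σp - σ)) * |Hm 0 ⬝ᵥ v| := by rw [one_div_mul_eq_div]; rfl
      _ ≤ σp / (σp ^ 2 - σ ^ 2) * |Hm 0 ⬝ᵥ v| := by gcongr
      _ = |u ⬝ᵥ z| := by
        rw [dotProduct_resolvent_eq_of_singular_pair hA hσ0 hgap hpair1 hpair2, abs_mul,
          abs_of_nonneg (hκ_lower.trans' (by positivity))]
      _ ≤ euclNorm z := by simpa [hu_unit] using abs_dotProduct_le_euclNorm_mul u z
  · calc euclNorm z ≤ σp / (σp ^ 2 - σ ^ 2) * euclNorm (Hm 0) :=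
          euclNorm_resolvent_le hA hσ0 hgap _
      _ ≤ 1 / (σp - σ) * euclNorm (Hm 0) := by gcongr; exact euclNorm_nonneg _
      _ = euclNorm (fun j => Hm 0 j) / (σp - σ) := one_div_mul_eq_div _ _

/-- Golub–Van Loan norm bounds on the TLS solution: if
`σ̂⁺_{n_x} > σ̂_{n_x+1}` and `δ̂ = σ̂⁺_{n_x} - σ̂_{n_x+1}`, then
`‖Ĥ⁻ v̂_{n_x}‖/(2δ̂) ≤ ‖â_tls‖ ≤ ‖Ĥ⁻‖/δ̂`, where `v̂_{n_x}` is the right singular vector of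
`Ĥ⁺` corresponding to its smallest singular value. -/
theorem golub_van_loan_tls_norm_bounds
    (nx p : ℕ)
    (Hp : Matrix (Fin nx) (Fin (p + 1)) ℝ)
    (Hm : Matrix (Fin 1) (Fin (p + 1)) ℝ)
    (H : Matrix (Fin (nx + 1)) (Fin (p + 1)) ℝ)
    (hH : ∀ (i : Fin (nx + 1)) (j : Fin (p + 1)),
      H i j = if h : (i : ℕ) < nx then Hp ⟨i, h⟩ j else Hm 0 j)
    (σp σ : ℝ) (hσp : σp = sminSV Hp) (hσ : σ = sminSV H)
    (hgap : σ < σp)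
    -- (u, v) is a singular pair of Ĥ⁺ for its smallest singular value σ̂⁺_{n_x}
    (u : Fin nx → ℝ) (v : Fin (p + 1) → ℝ)
    (hu_unit : euclNorm u = 1) (hv_unit : euclNorm v = 1)
    (hpair1 : Hp *ᵥ v = σp • u) (hpair2 : u ᵥ* Hp = σp • v)
    (atls : Matrix (Fin 1) (Fin nx) ℝ)
    (htls : atls = -(Hm * Hpᵀ * (Hp * Hpᵀ - σ ^ 2 • (1 : Matrix (Fin nx) (Fin nx) ℝ))⁻¹)) :
    |∑ j, Hm 0 j * v j| / (2 * (σp - σ)) ≤ euclNorm (fun j => atls 0 j) ∧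
    euclNorm (fun j => atls 0 j) ≤ euclNorm (fun j => Hm 0 j) / (σp - σ) :=
  golub_van_loan_tls_norm_bounds_general nx p Hp Hm H σp σ hσp hσ hgap u v hu_unit hpair1 hpair2
    atls htls
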